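/- For every r ∈ ℕ there exists a constant C > 0, depending only on r, such that for every lift H of an orientation-preserving C^∞ circle diffeomorphism and all real numbers α, β: d_r(H ∘ R_α ∘ H^{−1}, H ∘ R_β ∘ H^{−1}) ≤ C · |H|_{r+1}^{r+1} · |α − β|. -/

import Mathlib

noncomputable section
open MeasureTheory Filter Topology

/-- A lift of an orientation-preserving `C^∞` circle diffeomorphism: a `C^∞` map
`f : ℝ → ℝ` with `f (x+1) = f x + 1` and everywhere positive derivative. -/
def IsCircleDiffeoLift (f : ℝ → ℝ) : Prop :=
  ContDiff ℝ (⊤ : ℕ∞) f ∧ (∀ x : ℝ, f (x + 1) = f x + 1) ∧ ∀ x : ℝ, 0 < deriv f x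

/-- The `C^r` norm `‖φ‖_r = max_{0 ≤ i ≤ r} sup_x |φ^{(i)}(x)|`. -/
def CrNorm (r : ℕ) (φ : ℝ → ℝ) : ℝ :=
  (Finset.range (r + 1)).sup' (Finset.nonempty_range_iff.mpr r.succ_ne_zero)
    fun i => ⨆ x : ℝ, |iteratedDeriv i φ x|

/-- `d_r(f, g) = max {‖f - g‖_r, ‖f⁻¹ - g⁻¹‖_r}`. -/
def liftDist (r : ℕ) (f g : ℝ → ℝ) : ℝ :=
  max (CrNorm r (fun x => f x - g x))
    (CrNorm r (fun x => Function.invFun f x - Function.invFun g x))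

/-- `|f|_r = max {‖f - id‖_r, ‖f⁻¹ - id‖_r, 1}`. -/
def liftNorm (r : ℕ) (f : ℝ → ℝ) : ℝ :=
  max (max (CrNorm r (fun x => f x - x)) (CrNorm r (fun x => Function.invFun f x - x))) 1

/-- The lift `x ↦ x + a` of the rotation by `a`. -/
def RotLift (a : ℝ) : ℝ → ℝ := fun x => x + a

/-- The rotation number of the circle diffeomorphism induced by the lift `f` equals `a`
(mod 1): the translation number `lim (fⁿ(0) - 0)/n` equals `a + k` for some integer `k`. -/
def HasRotationNumber (f : ℝ → ℝ) (a : ℝ) : Prop :=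
  ∃ k : ℤ, Tendsto (fun n : ℕ => f^[n] 0 / (n : ℝ)) atTop (nhds (a + k))

/-- The lift of the `i`-th iterate (`i ∈ ℤ`) of the circle diffeomorphism induced by `f`. -/
def zpowLift (f : ℝ → ℝ) : ℤ → ℝ → ℝ := fun i =>
  if 0 ≤ i then f^[i.toNat] else (Function.invFun f)^[(-i).toNat]

/-- The ratio set of a circle diffeomorphism, described through the family `Fz i` of its
iterates (`i ∈ ℤ`) and the family `D i` of the derivatives of its iterates: `t ≥ 0` lies in
the ratio set iff for every Borel `A` of positive Haar measure and every `ε > 0` there are a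
Borel `B ⊆ A` of positive measure and `i ∈ ℤ` with `Fz i '' B ⊆ A` and `|D i x - t| < ε`
on `B`. -/
def ratioSet (Fz : ℤ → UnitAddCircle → UnitAddCircle) (D : ℤ → UnitAddCircle → ℝ) : Set ℝ :=
  {t : ℝ | 0 ≤ t ∧ ∀ A : Set UnitAddCircle, MeasurableSet A → 0 < volume A →
    ∀ ε : ℝ, 0 < ε → ∃ B : Set UnitAddCircle, MeasurableSet B ∧ B ⊆ A ∧ 0 < volume B ∧
      ∃ i : ℤ, Fz i '' B ⊆ A ∧ ∀ x ∈ B, |D i x - t| < ε}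

/-- A lift of an orientation-preserving `C¹` circle diffeomorphism. -/
def IsC1CircleLift (f : ℝ → ℝ) : Prop :=
  ContDiff ℝ 1 f ∧ (∀ x : ℝ, f (x + 1) = f x + 1) ∧ ∀ x : ℝ, 0 < deriv f x

/-! The conjugate `H ∘ R_c ∘ H⁻¹` is `x ↦ H (H⁻¹ x + c)`, so the difference of two conjugates
is `G ∘ H⁻¹` with `G y = H (y + c) - H (y + d)`. By the mean value theorem `|G⁽ⁱ⁾| ≤
sup |H⁽ⁱ⁺¹⁾| · |c - d| ≤ 2 |H|_{r+1} |c - d|` for `i ≤ r`, while `|(H⁻¹)⁽ⁱ⁾| ≤ 2 |H|_{r+1}` for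
`1 ≤ i ≤ r`; the Faà di Bruno bound `|(G ∘ H⁻¹)⁽ⁱ⁾| ≤ i! · C · Dⁱ`, with `C = 2 |H|_{r+1} |c - d|`
and `D = 2 |H|_{r+1}`, then gives the constant `r! 2^{r+1}`. The inverse of the conjugate of `R_c` is the conjugate of `R_{-c}`, so the same
bound controls the second half of `d_r`. -/

open scoped ContDiff Nat

lemma Function.Periodic.iteratedDeriv {𝕜 F : Type*} [NontriviallyNormedField 𝕜]
    [NormedAddCommGroup F] [NormedSpace 𝕜 F] {f : 𝕜 → F} {c : 𝕜} (hf : Function.Periodic f c)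
    (n : ℕ) :
    Function.Periodic (_root_.iteratedDeriv n f) c := fun x => by
  rw [← congrFun (iteratedDeriv_comp_add_const n f c) x]
  exact congrArg (fun g => _root_.iteratedDeriv n g x) (funext hf)

lemma abs_iteratedDeriv_le_crNorm {g : ℝ → ℝ} {r i : ℕ} (hg : ContDiff ℝ r g)
    (hp : Function.Periodic g 1) (hi : i ≤ r) (x : ℝ) :
    |iteratedDeriv i g x| ≤ CrNorm r g := by
  -- without periodicity the supremum in `CrNorm` could be an unbounded `⨆`, whose value is `0`
  have hbdd : BddAbove (Set.range fun y => |iteratedDeriv i g y|) :=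
    ((hp.iteratedDeriv i).comp abs |>.isBounded_of_continuous one_ne_zero
      (hg.continuous_iteratedDeriv i (by exact_mod_cast hi)).abs).bddAbove
  calc |iteratedDeriv i g x| ≤ ⨆ y, |iteratedDeriv i g y| := le_ciSup hbdd x
    _ ≤ CrNorm r g := Finset.le_sup' (fun j => ⨆ y, |iteratedDeriv j g y|)
        (Finset.mem_range_succ_iff.mpr hi)

lemma crNorm_le {g : ℝ → ℝ} {r : ℕ} {K : ℝ} (h : ∀ i ≤ r, ∀ x, |iteratedDeriv i g x| ≤ K) :
    CrNorm r g ≤ K :=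
  Finset.sup'_le _ _ fun i hi => ciSup_le (h i (Finset.mem_range_succ_iff.mp hi))

lemma crNorm_comp_le {g ψ : ℝ → ℝ} {r : ℕ} (hg : ContDiff ℝ r g) (hψ : ContDiff ℝ r ψ)
    {C D : ℝ} (hD : 1 ≤ D) (hgC : ∀ i ≤ r, ∀ y, |iteratedDeriv i g y| ≤ C)
    (hψD : ∀ i, 1 ≤ i → i ≤ r → ∀ x, |iteratedDeriv i ψ x| ≤ D ^ i) :
    CrNorm r (g ∘ ψ) ≤ r ! * C * D ^ r := by
  refine crNorm_le fun i hi x => ?_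
  have hC : 0 ≤ C := (abs_nonneg _).trans (hgC 0 (Nat.zero_le r) 0)
  simp only [← norm_iteratedFDeriv_eq_norm_iteratedDeriv, ← Real.norm_eq_abs] at hgC hψD ⊢
  calc ‖iteratedFDeriv ℝ i (g ∘ ψ) x‖ ≤ i ! * C * D ^ i :=
        norm_iteratedFDeriv_comp_le hg hψ (by exact_mod_cast hi) x
          (fun j hj => hgC j (hj.trans hi) _) (fun j hj hji => hψD j hj (hji.trans hi) x)
    _ ≤ r ! * C * D ^ r := by gcongr

lemma abs_iteratedDeriv_sub_comp_add_le {f : ℝ → ℝ} {i : ℕ} (hf : ContDiff ℝ (i + 1) f) {K : ℝ}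
    (hK : ∀ x, |iteratedDeriv (i + 1) f x| ≤ K) (c d y : ℝ) :
    |iteratedDeriv i (fun z => f (z + c) - f (z + d)) y| ≤ K * |c - d| := by
  have hshift (s : ℝ) : ContDiffAt ℝ i (fun z => f (z + s)) y :=
    ((hf.of_le (by exact_mod_cast Nat.le_succ i)).comp (contDiff_id.add contDiff_const)).contDiffAt
  rw [iteratedDeriv_fun_sub (hshift c) (hshift d), iteratedDeriv_comp_add_const,
    iteratedDeriv_comp_add_const]
  have hderiv (z : ℝ) : ‖deriv (iteratedDeriv i f) z‖ ≤ K := by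
    rw [← iteratedDeriv_succ]; exact hK z
  simpa [add_sub_add_left_eq_sub] using
    (convex_univ.norm_image_sub_le_of_norm_deriv_le
      (fun z _ => (hf.differentiable_iteratedDeriv' i).differentiableAt) (fun z _ => hderiv z)
      (Set.mem_univ (y + d)) (Set.mem_univ (y + c)))

lemma abs_iteratedDeriv_le_crNorm_sub_id_add_one {F : ℝ → ℝ} {R j : ℕ} (hF : ContDiff ℝ R F)
    (hper : ∀ x, F (x + 1) = F x + 1) (hj : 1 ≤ j) (hjR : j ≤ R) (x : ℝ) :
    |iteratedDeriv j F x| ≤ CrNorm R (fun y => F y - y) + 1 := by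
  have hFj : ContDiffAt ℝ j F x := (hF.of_le (by exact_mod_cast hjR)).contDiffAt
  have hsplit : iteratedDeriv j (fun y => F y - y) x
      = iteratedDeriv j F x - if j = 1 then 1 else 0 := by
    rw [iteratedDeriv_fun_sub (g := fun y => y) hFj contDiff_id.contDiffAt, iteratedDeriv_fun_id,
      if_neg (by omega)]
  have hid : |(if j = 1 then 1 else 0 : ℝ)| ≤ 1 := by split_ifs <;> norm_num
  have hper' : Function.Periodic (fun y => F y - y) 1 := fun y => by simp only [hper]; ring
  have hbound := abs_iteratedDeriv_le_crNorm (g := fun y => F y - y) (hF.sub contDiff_id)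
    hper' hjR x
  calc |iteratedDeriv j F x|
      = |iteratedDeriv j (fun y => F y - y) x + if j = 1 then 1 else 0| := by rw [hsplit]; ring_nf
    _ ≤ _ := (abs_add_le _ _).trans (add_le_add hbound hid)

lemma one_le_liftNorm (r : ℕ) (f : ℝ → ℝ) : 1 ≤ liftNorm r f := le_max_right _ _

namespace IsCircleDiffeoLift

variable {H : ℝ → ℝ}

theorem strictMono (hH : IsCircleDiffeoLift H) : StrictMono H := strictMono_of_deriv_pos hH.2.2

theorem surjective (hH : IsCircleDiffeoLift H) : Function.Surjective H :=
  (CircleDeg1Lift.continuous_iff_surjective ⟨⟨H, hH.strictMono.monotone⟩, hH.2.1⟩).1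
    hH.1.continuous

def toHomeomorph (hH : IsCircleDiffeoLift H) : ℝ ≃ₜ ℝ :=
  (hH.strictMono.orderIsoOfSurjective H hH.surjective).toHomeomorph

theorem invFun_eq_toHomeomorph_symm (hH : IsCircleDiffeoLift H) :
    Function.invFun H = hH.toHomeomorph.symm :=
  Function.invFun_eq_of_injective_of_rightInverse hH.strictMono.injective
    hH.toHomeomorph.apply_symm_apply

theorem contDiff_invFun (hH : IsCircleDiffeoLift H) : ContDiff ℝ ∞ (Function.invFun H) := by
  rw [hH.invFun_eq_toHomeomorph_symm]
  exact hH.toHomeomorph.contDiff_symm_deriv (fun x => (hH.2.2 x).ne')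
    (fun x => (hH.1.differentiable (by simp) x).hasDerivAt) hH.1

theorem apply_invFun (hH : IsCircleDiffeoLift H) (x : ℝ) : H (Function.invFun H x) = x :=
  Function.invFun_eq (hH.surjective x)

theorem invFun_apply (hH : IsCircleDiffeoLift H) (x : ℝ) : Function.invFun H (H x) = x :=
  Function.leftInverse_invFun hH.strictMono.injective x

theorem invFun_add_one (hH : IsCircleDiffeoLift H) (x : ℝ) :
    Function.invFun H (x + 1) = Function.invFun H x + 1 :=
  hH.strictMono.injective <| by rw [hH.2.1, hH.apply_invFun, hH.apply_invFun]

theorem leftInverse_conj_rotLift_neg (hH : IsCircleDiffeoLift H) (c : ℝ) :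
    Function.LeftInverse (H ∘ RotLift (-c) ∘ Function.invFun H)
      (H ∘ RotLift c ∘ Function.invFun H) := fun x => by
  simp only [Function.comp_apply, RotLift, hH.invFun_apply, add_neg_cancel_right, hH.apply_invFun]

theorem invFun_conj_rotLift (hH : IsCircleDiffeoLift H) (c : ℝ) :
    Function.invFun (H ∘ RotLift c ∘ Function.invFun H) = H ∘ RotLift (-c) ∘ Function.invFun H :=
  Function.invFun_eq_of_injective_of_rightInverse (hH.leftInverse_conj_rotLift_neg c).injective
    fun x => by simpa only [neg_neg] using hH.leftInverse_conj_rotLift_neg (-c) x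

theorem abs_iteratedDeriv_le_two_mul_liftNorm (hH : IsCircleDiffeoLift H) {R j : ℕ}
    (hj : 1 ≤ j) (hjR : j ≤ R) (x : ℝ) : |iteratedDeriv j H x| ≤ 2 * liftNorm R H := by
  have h := abs_iteratedDeriv_le_crNorm_sub_id_add_one (hH.1.of_le (by exact_mod_cast le_top))
    hH.2.1 hj hjR x
  have hL : CrNorm R (fun y => H y - y) ≤ liftNorm R H :=
    (le_max_left _ _).trans (le_max_left _ _)
  linarith [one_le_liftNorm R H]

theorem abs_iteratedDeriv_invFun_le_two_mul_liftNorm (hH : IsCircleDiffeoLift H) {R j : ℕ}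
    (hj : 1 ≤ j) (hjR : j ≤ R) (x : ℝ) :
    |iteratedDeriv j (Function.invFun H) x| ≤ 2 * liftNorm R H := by
  have h := abs_iteratedDeriv_le_crNorm_sub_id_add_one
    (hH.contDiff_invFun.of_le (by exact_mod_cast le_top)) hH.invFun_add_one hj hjR x
  have hL : CrNorm R (fun y => Function.invFun H y - y) ≤ liftNorm R H :=
    (le_max_right _ _).trans (le_max_left _ _)
  linarith [one_le_liftNorm R H]

theorem crNorm_conj_rotLift_sub_le (hH : IsCircleDiffeoLift H) (r : ℕ) (c d : ℝ) :
    CrNorm r (fun x =>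
        (H ∘ RotLift c ∘ Function.invFun H) x - (H ∘ RotLift d ∘ Function.invFun H) x) ≤
      r ! * 2 ^ (r + 1) * liftNorm (r + 1) H ^ (r + 1) * |c - d| := by
  set L := liftNorm (r + 1) H
  have hL : 1 ≤ 2 * L := by linarith [one_le_liftNorm (r + 1) H]
  have hsmooth {n : ℕ} : ContDiff ℝ n H := hH.1.of_le (by exact_mod_cast le_top)
  have key := crNorm_comp_le (g := fun y => H (y + c) - H (y + d)) (ψ := Function.invFun H)
    (r := r) (C := 2 * L * |c - d|) (D := 2 * L)
    ((hsmooth.comp (contDiff_id.add contDiff_const)).sub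
      (hsmooth.comp (contDiff_id.add contDiff_const)))
    (hH.contDiff_invFun.of_le (by exact_mod_cast le_top)) hL
    (fun i hi y => abs_iteratedDeriv_sub_comp_add_le hsmooth
      (fun x => hH.abs_iteratedDeriv_le_two_mul_liftNorm (by omega) (by omega) x) c d y)
    (fun i hi hir x => (hH.abs_iteratedDeriv_invFun_le_two_mul_liftNorm hi (by omega) x).trans
      (le_self_pow₀ hL (by omega)))
  calc _ = CrNorm r ((fun y => H (y + c) - H (y + d)) ∘ Function.invFun H) := rfl
    _ ≤ _ := key
    _ = _ := by ring

end IsCircleDiffeoLift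

/-- For every `r` there is `C = C(r) > 0` such that for every lift `H` of an
orientation-preserving smooth circle diffeomorphism and all `α, β ∈ ℝ`,
`d_r(H R_α H⁻¹, H R_β H⁻¹) ≤ C |H|_{r+1}^{r+1} |α - β|`. -/
theorem stmt_12 (r : ℕ) :
    ∃ C : ℝ, 0 < C ∧ ∀ H : ℝ → ℝ, IsCircleDiffeoLift H → ∀ a b : ℝ,
      liftDist r (H ∘ RotLift a ∘ Function.invFun H) (H ∘ RotLift b ∘ Function.invFun H) ≤
        C * liftNorm (r + 1) H ^ (r + 1) * |a - b| := by
  refine ⟨r ! * 2 ^ (r + 1), by positivity, fun H hH a b => max_le ?_ ?_⟩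
  · exact hH.crNorm_conj_rotLift_sub_le r a b
  · rw [hH.invFun_conj_rotLift, hH.invFun_conj_rotLift]
    simpa only [neg_sub_neg, abs_sub_comm] using hH.crNorm_conj_rotLift_sub_le r (-a) (-b)
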